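/- arXiv:2512.00978 — 3 statements merged into one kernel-verified Lean document; each statement's English description precedes it below -/
import Mathlib

section
/- For a nonnegative integer k and |q|<1, one has (q;q)_∞^2 · ∑_{j=0}^∞ q^{2j+k} / ((q;q)_j (q;q)_{j+k}) = -1 + (1+q^k) · ∑_{j=k}^∞ (-1)^{j-k} q^{j(j+1)/2 - k(k+1)/2}. -/
/-- Finite q-Pochhammer symbol `(a;q)_n = ∏_{r=0}^{n-1} (1 - a q^r)`. -/
noncomputable def qPoch (a q : ℂ) (n : ℕ) : ℂ := ∏ r ∈ Finset.range n, (1 - a * q ^ r)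

/-- Infinite q-Pochhammer symbol `(a;q)_∞`. -/
noncomputable def qPochInf (a q : ℂ) : ℂ := ∏' r : ℕ, (1 - a * q ^ r)

open Finset Filter Topology

namespace Stmt0Aux

/-- Tail product `(q^{j+1};q)_∞ = ∏_{r≥0} (1 - q·q^{r+j})`. -/
noncomputable def P (q : ℂ) (j : ℕ) : ℂ := ∏' r : ℕ, (1 - q * q ^ (r + j))

variable {q : ℂ}

lemma hfac_norm (hq : ‖q‖ < 1) (m : ℕ) : ‖q * q ^ m‖ ≤ ‖q‖ := by
  rw [norm_mul, norm_pow]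
  calc ‖q‖ * ‖q‖ ^ m ≤ ‖q‖ * 1 := by
        gcongr
        exact pow_le_one₀ (norm_nonneg q) hq.le
    _ = ‖q‖ := mul_one _

lemma hfac_ne (hq : ‖q‖ < 1) (m : ℕ) : 1 - q * q ^ m ≠ 0 := by
  intro h
  have h1 : q * q ^ m = 1 := by linear_combination -h
  have := hfac_norm hq m
  rw [h1] at this
  simp at this
  exact absurd (lt_of_le_of_lt this hq) (lt_irrefl _)

lemma log_bound (hq : ‖q‖ < 1) (m : ℕ) :
    ‖Complex.log (1 - q * q ^ m)‖ ≤ ((1 - ‖q‖)⁻¹ / 2 + 1) * ‖q * q ^ m‖ := by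
  have h0 : (0:ℝ) < 1 - ‖q‖ := by linarith
  have hzn : ‖-(q * q ^ m)‖ < 1 := by
    rw [norm_neg]; exact lt_of_le_of_lt (hfac_norm hq m) hq
  have h := Complex.norm_log_one_add_le hzn
  rw [show (1 : ℂ) + -(q * q ^ m) = 1 - q * q ^ m by ring] at h
  rw [norm_neg] at h
  refine h.trans ?_
  set x := ‖q * q ^ m‖ with hx
  have hx0 : 0 ≤ x := norm_nonneg _
  have hxq : x ≤ ‖q‖ := hfac_norm hq m
  have h1 : (1 - x)⁻¹ ≤ (1 - ‖q‖)⁻¹ := by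
    apply inv_anti₀ h0 (by linarith)
  have h3 : (0:ℝ) < (1 - ‖q‖)⁻¹ := by positivity
  have h4 : x * (1 - x)⁻¹ ≤ 1 * (1 - ‖q‖)⁻¹ :=
    mul_le_mul (by linarith) h1 (inv_nonneg.2 (by linarith)) one_pos.le
  have h5 : x ^ 2 * (1 - x)⁻¹ ≤ x * (1 * (1 - ‖q‖)⁻¹) := by
    have := mul_le_mul_of_nonneg_left h4 hx0
    nlinarith
  nlinarith

lemma log_le (hq : ‖q‖ < 1) (j r : ℕ) :
    ‖Complex.log (1 - q * q ^ (r + j))‖ ≤ (((1 - ‖q‖)⁻¹ / 2 + 1) * ‖q‖ ^ j) * ‖q‖ ^ r := by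
  refine (log_bound hq (r + j)).trans ?_
  rw [norm_mul, norm_pow]
  have h1 : ‖q‖ * ‖q‖ ^ (r + j) = (‖q‖ ^ j * ‖q‖ ^ r) * ‖q‖ := by ring
  have h0 : (0:ℝ) < 1 - ‖q‖ := by linarith
  have hc : (0:ℝ) ≤ (1 - ‖q‖)⁻¹ / 2 + 1 := by positivity
  have hq1 : ‖q‖ ≤ 1 := hq.le
  calc ((1 - ‖q‖)⁻¹ / 2 + 1) * (‖q‖ * ‖q‖ ^ (r + j))
      ≤ ((1 - ‖q‖)⁻¹ / 2 + 1) * (1 * ‖q‖ ^ (r + j)) := by gcongr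
    _ = (((1 - ‖q‖)⁻¹ / 2 + 1) * ‖q‖ ^ j) * ‖q‖ ^ r := by rw [pow_add]; ring

lemma sum_log_norm (hq : ‖q‖ < 1) (j : ℕ) :
    Summable (fun r : ℕ => ‖Complex.log (1 - q * q ^ (r + j))‖) :=
  Summable.of_nonneg_of_le (fun _ => norm_nonneg _) (log_le hq j)
    ((summable_geometric_of_lt_one (norm_nonneg q) hq).mul_left _)

lemma sum_log (hq : ‖q‖ < 1) (j : ℕ) :
    Summable (fun r : ℕ => Complex.log (1 - q * q ^ (r + j))) :=
  Summable.of_norm (sum_log_norm hq j)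

lemma logsum_norm (hq : ‖q‖ < 1) (j : ℕ) :
    ‖∑' r : ℕ, Complex.log (1 - q * q ^ (r + j))‖ ≤
      (((1 - ‖q‖)⁻¹ / 2 + 1) * (1 - ‖q‖)⁻¹) * ‖q‖ ^ j := by
  refine (norm_tsum_le_tsum_norm (sum_log_norm hq j)).trans ?_
  have h2 := Summable.tsum_le_tsum (log_le hq j) (sum_log_norm hq j)
    ((summable_geometric_of_lt_one (norm_nonneg q) hq).mul_left _)
  refine h2.trans ?_
  rw [tsum_mul_left, tsum_geometric_of_lt_one (norm_nonneg q) hq]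
  ring_nf
  exact le_of_eq (by ring)

lemma multipliableP (hq : ‖q‖ < 1) (j : ℕ) :
    Multipliable (fun r : ℕ => 1 - q * q ^ (r + j)) :=
  Complex.multipliable_of_summable_log (sum_log hq j)

set_option maxHeartbeats 1000000 in
lemma Pexp (hq : ‖q‖ < 1) (j : ℕ) :
    P q j = Complex.exp (∑' r : ℕ, Complex.log (1 - q * q ^ (r + j))) := by
  have := Complex.cexp_tsum_eq_tprod (f := fun r => 1 - q * q ^ (r + j))
    (fun r => hfac_ne hq _) (sum_log hq j)
  exact this.symm

set_option maxHeartbeats 1000000 in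
lemma Pfactor (hq : ‖q‖ < 1) (j : ℕ) : P q j = (1 - q * q ^ j) * P q (j + 1) := by
  have hm : Multipliable (fun n : ℕ => 1 - q * q ^ ((n + 1) + j)) :=
    (multipliableP hq (j + 1)).congr (fun b => by rw [show b + (j + 1) = b + 1 + j from by omega])
  rw [P, tprod_eq_zero_mul' hm]
  congr 1
  · simp
  · rw [P]
    exact tprod_congr fun b => by rw [show b + 1 + j = b + (j + 1) from by omega]

/-- Uniform bound for the tails. -/
noncomputable def B (q : ℂ) : ℝ := Real.exp (((1 - ‖q‖)⁻¹ / 2 + 1) * (1 - ‖q‖)⁻¹)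

lemma B_pos : 0 < B q := Real.exp_pos _

lemma Pbound (hq : ‖q‖ < 1) (j : ℕ) : ‖P q j‖ ≤ B q := by
  rw [Pexp hq j, Complex.norm_exp]
  apply Real.exp_le_exp.2
  refine (Complex.re_le_norm _).trans ?_
  refine (logsum_norm hq j).trans ?_
  have h0 : (0:ℝ) < 1 - ‖q‖ := by linarith
  have hc : (0:ℝ) ≤ ((1 - ‖q‖)⁻¹ / 2 + 1) * (1 - ‖q‖)⁻¹ := by positivity
  have hq1 : ‖q‖ ^ j ≤ 1 := pow_le_one₀ (norm_nonneg q) hq.le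
  calc (((1 - ‖q‖)⁻¹ / 2 + 1) * (1 - ‖q‖)⁻¹) * ‖q‖ ^ j
      ≤ (((1 - ‖q‖)⁻¹ / 2 + 1) * (1 - ‖q‖)⁻¹) * 1 := by gcongr
    _ = _ := mul_one _

lemma Ptend (hq : ‖q‖ < 1) : Tendsto (fun N => P q N) atTop (𝓝 1) := by
  have h1 : Tendsto (fun N : ℕ => ∑' r : ℕ, Complex.log (1 - q * q ^ (r + N)))
      atTop (𝓝 0) := by
    apply squeeze_zero_norm (logsum_norm hq)
    have := (tendsto_pow_atTop_nhds_zero_of_lt_one (norm_nonneg q) hq).const_mul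
      (((1 - ‖q‖)⁻¹ / 2 + 1) * (1 - ‖q‖)⁻¹)
    simpa using this
  have h2 := (Complex.continuous_exp.tendsto 0).comp h1
  rw [Complex.exp_zero] at h2
  refine h2.congr fun N => (Pexp hq N).symm

/-- The auxiliary series `H_k = ∑_j q^j P_j P_{j+k}`. -/
noncomputable def Hs (q : ℂ) (k : ℕ) : ℂ := ∑' j : ℕ, q ^ j * P q j * P q (j + k)

lemma norm_term_le (hq : ‖q‖ < 1) (k j : ℕ) {e : ℕ} (he : j ≤ e) :
    ‖q ^ e * P q j * P q (j + k)‖ ≤ (B q * B q) * ‖q‖ ^ j := by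
  rw [norm_mul, norm_mul, norm_pow]
  have h1 : ‖q‖ ^ e ≤ ‖q‖ ^ j := pow_le_pow_of_le_one (norm_nonneg q) hq.le he
  calc ‖q‖ ^ e * ‖P q j‖ * ‖P q (j + k)‖
      ≤ ‖q‖ ^ j * B q * B q :=
        mul_le_mul (mul_le_mul h1 (Pbound hq j) (norm_nonneg _)
            (pow_nonneg (norm_nonneg q) j))
          (Pbound hq (j + k)) (norm_nonneg _)
          (mul_nonneg (pow_nonneg (norm_nonneg q) j) B_pos.le)
    _ = (B q * B q) * ‖q‖ ^ j := by ring

lemma sumH (hq : ‖q‖ < 1) (k : ℕ) :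
    Summable (fun j : ℕ => q ^ j * P q j * P q (j + k)) :=
  Summable.of_norm_bounded
    ((summable_geometric_of_lt_one (norm_nonneg q) hq).mul_left _)
    (fun j => norm_term_le hq k j (le_refl j))

lemma sumG (hq : ‖q‖ < 1) (k : ℕ) :
    Summable (fun j : ℕ => q ^ (2 * j + k) * P q j * P q (j + k)) :=
  Summable.of_norm_bounded
    ((summable_geometric_of_lt_one (norm_nonneg q) hq).mul_left _)
    (fun j => norm_term_le hq k j (by omega))

lemma Hbound (hq : ‖q‖ < 1) (k : ℕ) : ‖Hs q k‖ ≤ (B q * B q) * (1 - ‖q‖)⁻¹ := by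
  rw [Hs]
  refine (norm_tsum_le_tsum_norm ?_).trans ?_
  · exact Summable.of_nonneg_of_le (fun _ => norm_nonneg _)
      (fun j => norm_term_le hq k j (le_refl j))
      ((summable_geometric_of_lt_one (norm_nonneg q) hq).mul_left _)
  · refine (Summable.tsum_le_tsum (fun j => norm_term_le hq k j (le_refl j))
      (Summable.of_nonneg_of_le (fun _ => norm_nonneg _)
        (fun j => norm_term_le hq k j (le_refl j))
        ((summable_geometric_of_lt_one (norm_nonneg q) hq).mul_left _))
      ((summable_geometric_of_lt_one (norm_nonneg q) hq).mul_left _)).trans ?_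
    rw [tsum_mul_left, tsum_geometric_of_lt_one (norm_nonneg q) hq]

/-- Key telescoping partial-sum identity. -/
lemma Hpartial (hq : ‖q‖ < 1) (k N : ℕ) :
    ∑ j ∈ range (N + 1), q ^ j * P q j * P q (j + k) =
      P q N * P q (N + k) -
        q ^ (k + 1) * ∑ j ∈ range N, q ^ j * P q j * P q (j + k + 1) := by
  induction N with
  | zero => simp
  | succ N ih =>
      rw [Finset.sum_range_succ, ih, Finset.sum_range_succ]
      have h1 : P q N = (1 - q * q ^ N) * P q (N + 1) := Pfactor hq N
      have h2 : P q (N + k) = (1 - q * q ^ (N + k)) * P q (N + k + 1) := Pfactor hq (N + k)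
      have e1 : N + 1 + k = N + k + 1 := by omega
      rw [e1, h1, h2]
      ring

lemma Hrec (hq : ‖q‖ < 1) (k : ℕ) : Hs q k = 1 - q ^ (k + 1) * Hs q (k + 1) := by
  have h1 : Tendsto (fun N : ℕ => ∑ j ∈ range (N + 1), q ^ j * P q j * P q (j + k))
      atTop (𝓝 (Hs q k)) :=
    ((sumH hq k).hasSum.tendsto_sum_nat).comp (tendsto_add_atTop_nat 1)
  have h2 : Tendsto (fun N : ℕ => P q N * P q (N + k) -
      q ^ (k + 1) * ∑ j ∈ range N, q ^ j * P q j * P q (j + k + 1))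
      atTop (𝓝 (1 * 1 - q ^ (k + 1) * Hs q (k + 1))) := by
    apply Tendsto.sub
    · exact (Ptend hq).mul ((Ptend hq).comp (tendsto_add_atTop_nat k))
    · exact Tendsto.const_mul _ ((sumH hq (k + 1)).hasSum.tendsto_sum_nat.congr
        (fun n => by
          apply Finset.sum_congr rfl
          intro j _
          rw [show j + (k + 1) = j + k + 1 from by omega]))
  have h3 := h1.congr (fun N => Hpartial hq k N)
  have := tendsto_nhds_unique h3 h2
  rw [this]; ring

/-- Exponent `E j k = T(j+k) - T(k)`. -/
def E (j k : ℕ) : ℕ := (j + k) * (j + k + 1) / 2 - k * (k + 1) / 2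

lemma T_succ (n : ℕ) : (n + 1) * (n + 1 + 1) / 2 = n * (n + 1) / 2 + (n + 1) := by
  obtain ⟨t, ht⟩ := Nat.even_mul_succ_self n
  have e1 : (n + 1) * (n + 1 + 1) = n * (n + 1) + 2 * (n + 1) := by ring
  omega

lemma T_le (k m : ℕ) (h : k ≤ m) : k * (k + 1) / 2 ≤ m * (m + 1) / 2 := by
  induction m with
  | zero =>
      have hk : k = 0 := by omega
      subst hk; exact le_refl _
  | succ m ih =>
      rcases Nat.lt_or_ge k (m + 1) with h' | h'
      · have h1 := T_succ m
        have h2 := ih (by omega)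
        omega
      · have hk : k = m + 1 := by omega
        subst hk; exact le_refl _

lemma E_zero (k : ℕ) : E 0 k = 0 := by simp [E]

lemma E_succ (j k : ℕ) : E (j + 1) k = E j k + (j + k + 1) := by
  unfold E
  have h1 := T_succ (j + k)
  have h2 := T_le k (j + k) (by omega)
  have e1 : j + 1 + k = j + k + 1 := by omega
  rw [e1]
  omega

lemma E_shift (j k : ℕ) : E (j + 1) k = (k + 1) + E j (k + 1) := by
  unfold E
  have h1 := T_succ k
  have h2 := T_le (k + 1) (j + (k + 1)) (by omega)
  have h3 := T_le k (j + k) (by omega)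
  have e1 : j + 1 + k = j + (k + 1) := by omega
  have e2 : j + (k + 1) + 1 = j + (k + 1) + 1 := rfl
  rw [e1]
  omega

lemma E_ge (j k : ℕ) : j ≤ E j k := by
  induction j with
  | zero => omega
  | succ j ih => have := E_succ j k; omega

/-- The partial theta series. -/
noncomputable def Th (q : ℂ) (k : ℕ) : ℂ := ∑' j : ℕ, (-1 : ℂ) ^ j * q ^ E j k

variable {q : ℂ}

lemma sumTh (hq : ‖q‖ < 1) (k : ℕ) :
    Summable (fun j : ℕ => (-1 : ℂ) ^ j * q ^ E j k) := by
  apply Summable.of_norm_bounded (summable_geometric_of_lt_one (norm_nonneg q) hq)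
  intro j
  rw [norm_mul, norm_pow, norm_pow, norm_neg, norm_one, one_pow, one_mul]
  exact pow_le_pow_of_le_one (norm_nonneg q) hq.le (E_ge j k)

lemma Thbound (hq : ‖q‖ < 1) (k : ℕ) : ‖Th q k‖ ≤ (1 - ‖q‖)⁻¹ := by
  rw [Th]
  have hb : ∀ j : ℕ, ‖(-1 : ℂ) ^ j * q ^ E j k‖ ≤ ‖q‖ ^ j := by
    intro j
    rw [norm_mul, norm_pow, norm_pow, norm_neg, norm_one, one_pow, one_mul]
    exact pow_le_pow_of_le_one (norm_nonneg q) hq.le (E_ge j k)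
  have hsum : Summable (fun j : ℕ => ‖(-1 : ℂ) ^ j * q ^ E j k‖) :=
    Summable.of_nonneg_of_le (fun _ => norm_nonneg _) hb
      (summable_geometric_of_lt_one (norm_nonneg q) hq)
  refine (norm_tsum_le_tsum_norm hsum).trans ?_
  refine (Summable.tsum_le_tsum hb hsum (summable_geometric_of_lt_one (norm_nonneg q) hq)).trans ?_
  rw [tsum_geometric_of_lt_one (norm_nonneg q) hq]

lemma Threc (hq : ‖q‖ < 1) (k : ℕ) : Th q k = 1 - q ^ (k + 1) * Th q (k + 1) := by
  rw [Th, Summable.tsum_eq_zero_add (sumTh hq k)]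
  have h0 : (-1 : ℂ) ^ (0 : ℕ) * q ^ E 0 k = 1 := by rw [E_zero]; simp
  rw [h0]
  have h1 : ∀ j : ℕ, (-1 : ℂ) ^ (j + 1) * q ^ E (j + 1) k =
      -(q ^ (k + 1) * ((-1 : ℂ) ^ j * q ^ E j (k + 1))) := by
    intro j
    rw [E_shift j k, pow_add, pow_succ]
    ring
  rw [tsum_congr h1, tsum_neg, tsum_mul_left, Th]
  ring

lemma HeqTh (hq : ‖q‖ < 1) (k : ℕ) : Hs q k = Th q k := by
  set C : ℝ := (B q * B q) * (1 - ‖q‖)⁻¹ + (1 - ‖q‖)⁻¹ with hC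
  have key : ∀ M k, ‖Hs q k - Th q k‖ ≤ ‖q‖ ^ M * C := by
    intro M
    induction M with
    | zero =>
        intro k
        rw [pow_zero, one_mul, hC]
        exact (norm_sub_le _ _).trans (add_le_add (Hbound hq k) (Thbound hq k))
    | succ M ih =>
        intro k
        have hd : Hs q k - Th q k = -(q ^ (k + 1) * (Hs q (k + 1) - Th q (k + 1))) := by
          rw [Hrec hq k, Threc hq k]; ring
        rw [hd, norm_neg, norm_mul, norm_pow]
        have h1 : ‖q‖ ^ (k + 1) ≤ ‖q‖ ^ 1 :=
          pow_le_pow_of_le_one (norm_nonneg q) hq.le (by omega)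
        rw [pow_one] at h1
        calc ‖q‖ ^ (k + 1) * ‖Hs q (k + 1) - Th q (k + 1)‖
            ≤ ‖q‖ * (‖q‖ ^ M * C) :=
              mul_le_mul h1 (ih (k + 1)) (norm_nonneg _) (norm_nonneg q)
          _ = ‖q‖ ^ (M + 1) * C := by ring
  have h2 : Tendsto (fun M : ℕ => ‖q‖ ^ M * C) atTop (𝓝 0) := by
    have := (tendsto_pow_atTop_nhds_zero_of_lt_one (norm_nonneg q) hq).mul_const C
    simpa using this
  have h3 : ‖Hs q k - Th q k‖ ≤ 0 :=
    ge_of_tendsto h2 (Filter.Eventually.of_forall (fun M => key M k))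
  have h4 : Hs q k - Th q k = 0 := by
    have := norm_nonneg (Hs q k - Th q k)
    have : ‖Hs q k - Th q k‖ = 0 := le_antisymm h3 this
    exact norm_eq_zero.mp this
  linear_combination h4

lemma qpoch_ne (hq : ‖q‖ < 1) (n : ℕ) : qPoch q q n ≠ 0 := by
  rw [qPoch]
  exact Finset.prod_ne_zero_iff.2 fun r _ => hfac_ne hq r

lemma split (hq : ‖q‖ < 1) (n : ℕ) : qPoch q q n * P q n = qPochInf q q := by
  rw [qPoch, P, qPochInf]
  exact Multipliable.prod_mul_tprod_nat_mul' (f := fun r => 1 - q * q ^ r) (multipliableP hq n)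

end Stmt0Aux

open Stmt0Aux

/-- Lemma 1: `(q;q)_∞² ∑_{j≥0} q^{2j+k}/((q;q)_j (q;q)_{j+k})
    = -1 + (1+q^k) ∑_{j≥k} (-1)^{j-k} q^{j(j+1)/2 - k(k+1)/2}`. -/
theorem stmt_0 (k : ℕ) (q : ℂ) (hq : ‖q‖ < 1) :
    (qPochInf q q) ^ 2 *
      ∑' j : ℕ, q ^ (2 * j + k) / (qPoch q q j * qPoch q q (j + k)) =
    -1 + (1 + q ^ k) *
      ∑' j : ℕ, (-1 : ℂ) ^ j * q ^ ((j + k) * (j + k + 1) / 2 - k * (k + 1) / 2) := by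
  have hTh : ∑' j : ℕ, (-1 : ℂ) ^ j * q ^ ((j + k) * (j + k + 1) / 2 - k * (k + 1) / 2)
      = Th q k := rfl
  have hLHS : qPochInf q q ^ 2 *
      ∑' j : ℕ, q ^ (2 * j + k) / (qPoch q q j * qPoch q q (j + k))
      = ∑' j : ℕ, q ^ (2 * j + k) * P q j * P q (j + k) := by
    rw [← tsum_mul_left]
    apply tsum_congr
    intro j
    have h1 := split hq j
    have h2 := split hq (j + k)
    have n1 := qpoch_ne hq j
    have n2 := qpoch_ne hq (j + k)
    rw [pow_two, show qPochInf q q * qPochInf q q =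
      (qPoch q q j * P q j) * (qPoch q q (j + k) * P q (j + k)) from by rw [h1, h2]]
    field_simp
  rw [hTh, hLHS]
  cases k with
  | zero =>
      set w : ℕ → ℂ :=
        fun j => q ^ j * P q j * P q (j + 0) - q ^ (2 * j + 0) * P q j * P q (j + 0) with hw
      have hsub : Hs q 0 - ∑' j : ℕ, q ^ (2 * j + 0) * P q j * P q (j + 0) = ∑' j : ℕ, w j :=
        (Summable.tsum_sub (sumH hq 0) (sumG hq 0)).symm
      have hw0 : w 0 = 0 := by simp [hw]
      have hwsucc : ∀ j : ℕ, w (j + 1) = q * (q ^ j * P q j * P q (j + 1)) := by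
        intro j
        have hp := Pfactor hq j
        simp only [hw, add_zero]
        rw [hp]
        ring
      have hwsum : Summable w := (sumH hq 0).sub (sumG hq 0)
      have hwval : ∑' j : ℕ, w j = q * Hs q 1 := by
        rw [Summable.tsum_eq_zero_add hwsum, hw0, zero_add, tsum_congr hwsucc, tsum_mul_left, Hs]
      have hr := Hrec hq 0
      have hH := HeqTh hq 0
      rw [hwval] at hsub
      rw [pow_one] at hr
      have : ∑' j : ℕ, q ^ (2 * j + 0) * P q j * P q (j + 0) = 2 * Th q 0 - 1 := by
        rw [← hH]
        linear_combination -hsub - hr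
      rw [this]
      ring
  | succ k' =>
      have hterm : ∀ j : ℕ, q ^ (2 * j + (k' + 1)) * P q j * P q (j + (k' + 1)) =
          q ^ j * P q j * P q (j + (k' + 1)) - q ^ j * P q j * P q (j + k') := by
        intro j
        have hp := Pfactor hq (j + k')
        rw [hp, show j + k' + 1 = j + (k' + 1) from by omega]
        ring
      rw [tsum_congr hterm, Summable.tsum_sub (sumH hq (k' + 1)) (sumH hq k')]
      have e1 : ∑' b : ℕ, q ^ b * P q b * P q (b + (k' + 1)) = Hs q (k' + 1) := rfl
      have e2 : ∑' b : ℕ, q ^ b * P q b * P q (b + k') = Hs q k' := rfl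
      rw [e1, e2, HeqTh hq (k' + 1), HeqTh hq k', Threc hq k']
      ring
end

section
/- For a nonnegative integer k and |q|<1, one has (q^2;q^2)_∞^2 · ∑_{j=0}^∞ q^{2j+k} / ((q^2;q^2)_j (q^2;q^2)_{j+k}) = ∑_{j=k}^∞ (-1)^{j-k} q^{j(j+1) - k^2}. -/
open Finset

lemma qPoch_succ (a q : ℂ) (n : ℕ) :
    qPoch a q (n + 1) = qPoch a q n * (1 - a * q ^ n) := Finset.prod_range_succ _ _

lemma qPoch_succ' (a q : ℂ) (n : ℕ) :
    qPoch a q (n + 1) = (1 - a) * qPoch (a * q) q n := by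
  rw [qPoch, Finset.prod_range_succ', qPoch, mul_comm]
  simp [pow_succ, mul_assoc, mul_comm, mul_left_comm]

lemma qPoch_factor_ne_zero {z q : ℂ} (hz : ‖z‖ < 1) (hq : ‖q‖ ≤ 1) (r : ℕ) :
    (1 : ℂ) - z * q ^ r ≠ 0 := by
  have h : ‖z * q ^ r‖ < 1 := by
    calc ‖z * q ^ r‖ = ‖z‖ * ‖q‖ ^ r := by rw [norm_mul, norm_pow]
    _ ≤ ‖z‖ * 1 := by
        refine mul_le_mul_of_nonneg_left ?_ (norm_nonneg z)
        exact pow_le_one₀ (norm_nonneg q) hq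
    _ < 1 := by simpa using hz
  intro h0
  have : z * q ^ r = 1 := by linear_combination -h0
  rw [this] at h
  simp at h

lemma qPoch_ne_zero {z q : ℂ} (hz : ‖z‖ < 1) (hq : ‖q‖ ≤ 1) (n : ℕ) :
    qPoch z q n ≠ 0 :=
  Finset.prod_ne_zero_iff.2 fun r _ => qPoch_factor_ne_zero hz hq r

/-- Weierstrass-type inequality. -/
lemma one_sub_sum_le_prod_one_sub (a : ℕ → ℝ) (h0 : ∀ i, 0 ≤ a i) (h1 : ∀ i, a i ≤ 1) :
    ∀ n, 1 - ∑ i ∈ range n, a i ≤ ∏ i ∈ range n, (1 - a i) := by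
  intro n
  induction n with
  | zero => simp
  | succ n ih =>
    rw [Finset.prod_range_succ, Finset.sum_range_succ]
    have hprod : (0:ℝ) ≤ ∏ i ∈ range n, (1 - a i) :=
      Finset.prod_nonneg fun i _ => by linarith [h1 i]
    have h2 : (1 - ∑ i ∈ range n, a i) * (1 - a n) ≤ (∏ i ∈ range n, (1 - a i)) * (1 - a n) :=
      mul_le_mul_of_nonneg_right ih (by linarith [h1 n])
    nlinarith [h0 n, Finset.sum_nonneg (fun i (_ : i ∈ range n) => h0 i)]

/-- Uniform positive lower bound for `‖qPoch p p n‖`. -/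
lemma qPoch_norm_lower {p : ℂ} (hp : ‖p‖ < 1) :
    ∃ c : ℝ, 0 < c ∧ ∀ n, c ≤ ‖qPoch p p n‖ := by
  set t := ‖p‖ with ht
  have ht0 : 0 ≤ t := norm_nonneg p
  have htlt : t < 1 := hp
  -- choose M with t^(M+1) * (1-t)⁻¹ ≤ 1/2
  obtain ⟨M, hM⟩ : ∃ M, t ^ (M + 1) ≤ (1 - t) / 2 := by
    have h := tendsto_pow_atTop_nhds_zero_of_lt_one ht0 htlt
    have h2 : (0:ℝ) < (1 - t) / 2 := by linarith
    obtain ⟨N, hN⟩ := (h.eventually (eventually_le_nhds h2)).exists_forall_of_atTop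
    exact ⟨N, hN (N + 1) (Nat.le_succ N)⟩
  have hfac : ∀ r : ℕ, 0 < 1 - t ^ (r + 1) := by
    intro r
    have : t ^ (r + 1) ≤ t ^ 1 := pow_le_pow_of_le_one ht0 htlt.le (by omega)
    simp only [pow_one] at this
    linarith
  have hfacle : ∀ r : ℕ, 1 - t ^ (r + 1) ≤ 1 := fun r => by
    have : 0 ≤ t ^ (r + 1) := pow_nonneg ht0 _
    linarith
  set Pr : ℝ := ∏ r ∈ range M, (1 - t ^ (r + 1)) with hPr
  have hPrpos : 0 < Pr := Finset.prod_pos fun r _ => hfac r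
  refine ⟨Pr * (1 / 2), by positivity, fun n => ?_⟩
  -- first: ‖qPoch p p n‖ ≥ real product
  have key : ∀ m, (∏ r ∈ range m, (1 - t ^ (r + 1))) ≤ ‖qPoch p p m‖ := by
    intro m
    rw [qPoch, norm_prod]
    refine Finset.prod_le_prod (fun r _ => (hfac r).le) (fun r _ => ?_)
    have : ‖p * p ^ r‖ = t ^ (r + 1) := by rw [norm_mul, norm_pow, pow_succ, mul_comm]
    calc 1 - t ^ (r + 1) = ‖(1:ℂ)‖ - ‖p * p ^ r‖ := by rw [this]; simp
    _ ≤ ‖1 - p * p ^ r‖ := norm_sub_norm_le _ _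
  refine le_trans ?_ (key n)
  -- now real product lower bound
  rcases le_or_gt n M with hnM | hnM
  · -- n ≤ M : product over range n ≥ product over range M ≥ Pr * 1/2
    have h1 : Pr ≤ ∏ r ∈ range n, (1 - t ^ (r + 1)) := by
      obtain ⟨m, rfl⟩ := Nat.exists_eq_add_of_le hnM
      rw [hPr, Finset.prod_range_add]
      have h2 : ∏ r ∈ range m, (1 - t ^ (n + r + 1)) ≤ 1 :=
        Finset.prod_le_one (fun r _ => (hfac _).le) (fun r _ => hfacle _)
      calc (∏ r ∈ range n, (1 - t ^ (r + 1))) * ∏ r ∈ range m, (1 - t ^ (n + r + 1))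
          ≤ (∏ r ∈ range n, (1 - t ^ (r + 1))) * 1 := by
            refine mul_le_mul_of_nonneg_left h2 (Finset.prod_nonneg fun r _ => (hfac r).le)
      _ = _ := by ring
    calc Pr * (1 / 2) ≤ Pr * 1 := by
          refine mul_le_mul_of_nonneg_left (by norm_num) hPrpos.le
    _ = Pr := by ring
    _ ≤ _ := h1
  · -- n > M : split
    obtain ⟨m, rfl⟩ := Nat.exists_eq_add_of_le hnM.le
    rw [Finset.prod_range_add]
    have htail : (1:ℝ) / 2 ≤ ∏ r ∈ range m, (1 - t ^ (M + r + 1)) := by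
      refine le_trans ?_ (one_sub_sum_le_prod_one_sub (fun r => t ^ (M + r + 1))
        (fun i => pow_nonneg ht0 _) (fun i => by
          have : t ^ (M + i + 1) ≤ 1 := pow_le_one₀ ht0 htlt.le
          linarith) m)
      have hsum : ∑ r ∈ range m, t ^ (M + r + 1) ≤ 1 / 2 := by
        have heq : ∀ r, t ^ (M + r + 1) = t ^ (M + 1) * t ^ r := fun r => by
          rw [← pow_add]; ring_nf
        calc ∑ r ∈ range m, t ^ (M + r + 1) = t ^ (M + 1) * ∑ r ∈ range m, t ^ r := by
              rw [Finset.mul_sum]; exact Finset.sum_congr rfl fun r _ => heq r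
        _ ≤ t ^ (M + 1) * (1 - t)⁻¹ := by
              refine mul_le_mul_of_nonneg_left ?_ (pow_nonneg ht0 _)
              calc ∑ r ∈ range m, t ^ r ≤ ∑' r : ℕ, t ^ r :=
                    Summable.sum_le_tsum _ (fun i _ => pow_nonneg ht0 i)
                      (summable_geometric_of_lt_one ht0 htlt)
              _ = (1 - t)⁻¹ := tsum_geometric_of_lt_one ht0 htlt
        _ ≤ (1 - t) / 2 * (1 - t)⁻¹ := by
              refine mul_le_mul_of_nonneg_right hM (by
                have : (0:ℝ) < 1 - t := by linarith
                positivity)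
        _ = 1 / 2 := by
              have h1t : (1:ℝ) - t ≠ 0 := by intro h; rw [sub_eq_zero] at h; simp [← h] at htlt
              field_simp
      linarith
    calc Pr * (1 / 2) ≤ Pr * ∏ r ∈ range m, (1 - t ^ (M + r + 1)) :=
          mul_le_mul_of_nonneg_left htail hPrpos.le
    _ = _ := by rw [hPr]

open Filter

/-- Multipliability of `(z;q)_∞`-type products. -/
lemma qPoch_multipliable {z q : ℂ} (hz : ‖z‖ < 1) (hq : ‖q‖ < 1) :
    Multipliable (fun r : ℕ => 1 - z * q ^ r) := by
  have hfn : ∀ (_ : Unit) (r : ℕ), (1 : ℂ) - z * q ^ r ≠ 0 :=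
    fun _ r => qPoch_factor_ne_zero hz hq.le r
  refine Complex.multipliable_of_summable_log (f := fun r => 1 - z * q ^ r) ?_
  -- Summable (fun r => Complex.log (1 - z * q ^ r))
  have hten : Tendsto (fun r : ℕ => ‖z‖ * ‖q‖ ^ r) atTop (nhds 0) := by
    simpa using (tendsto_pow_atTop_nhds_zero_of_lt_one (norm_nonneg q) hq).const_mul ‖z‖
  have hev : ∀ᶠ r in atTop, ‖z‖ * ‖q‖ ^ r ≤ 1 / 2 :=
    hten.eventually (eventually_le_nhds (by norm_num))
  refine Summable.of_norm_bounded_eventually (g := fun r => 3 / 2 * (‖z‖ * ‖q‖ ^ r)) ?_ ?_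
  · exact (((summable_geometric_of_lt_one (norm_nonneg q) hq).mul_left ‖z‖).mul_left (3/2))
  · rw [Nat.cofinite_eq_atTop]
    filter_upwards [hev] with r hr
    have h1 : ‖-(z * q ^ r)‖ ≤ 1 / 2 := by
      rw [norm_neg, norm_mul, norm_pow]; exact hr
    have := Complex.norm_log_one_add_half_le_self h1
    rw [show (1 : ℂ) + -(z * q ^ r) = 1 - z * q ^ r by ring] at this
    calc ‖Complex.log (1 - z * q ^ r)‖ ≤ 3 / 2 * ‖-(z * q ^ r)‖ := this
    _ = 3 / 2 * (‖z‖ * ‖q‖ ^ r) := by rw [norm_neg, norm_mul, norm_pow]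

lemma qPoch_tendsto {z q : ℂ} (hz : ‖z‖ < 1) (hq : ‖q‖ < 1) :
    Tendsto (fun n : ℕ => qPoch z q n) atTop (nhds (qPochInf z q)) :=
  (qPoch_multipliable hz hq).hasProd.tendsto_prod_nat

lemma pow_norm_lt_one {p : ℂ} (hp : ‖p‖ < 1) (m : ℕ) : ‖p ^ (m + 1)‖ < 1 := by
  rw [norm_pow]
  calc ‖p‖ ^ (m + 1) ≤ ‖p‖ := pow_le_of_le_one (norm_nonneg p) hp.le (by omega)
  _ < 1 := hp

/-- Tail splitting: `(p;p)_∞ = (p;p)_m * (p^(m+1); p)_∞`. -/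
lemma qPochInf_split {p : ℂ} (hp : ‖p‖ < 1) (m : ℕ) :
    qPochInf p p = qPoch p p m * qPochInf (p ^ (m + 1)) p := by
  have hcongr : ∀ i : ℕ, (1 : ℂ) - p ^ (m + 1) * p ^ i = 1 - p * p ^ (i + m) := by
    intro i
    rw [← pow_succ' p (i + m), ← pow_add]
    ring_nf
  have hm2 : Multipliable (fun i : ℕ => 1 - p * p ^ (i + m)) := by
    refine (qPoch_multipliable (pow_norm_lt_one hp m) hp).congr fun i => (hcongr i)
  have h := Multipliable.prod_mul_tprod_nat_mul' (f := fun r : ℕ => 1 - p * p ^ r) (k := m) hm2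
  rw [qPochInf, ← h, qPoch]
  congr 1
  rw [qPochInf]
  exact tprod_congr fun i => (hcongr i).symm

noncomputable def eulerF (p z : ℂ) : ℂ :=
  ∑' i : ℕ, (-1) ^ i * p ^ (i * (i - 1) / 2) * z ^ i / qPoch p p i

noncomputable def eulerG (p z : ℂ) : ℂ := ∑' n : ℕ, z ^ n / qPoch p p n

lemma Tsucc (i : ℕ) : (i + 1) * i / 2 = i * (i - 1) / 2 + i := by
  cases i with
  | zero => rfl
  | succ n =>
    have h : (n + 1 + 1) * (n + 1) = (n + 1) * n + (n + 1) * 2 := by ring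
    rw [h, Nat.add_mul_div_right _ _ (by norm_num : (0:ℕ) < 2)]
    simp

lemma div_qPoch_norm_le {p : ℂ} {c : ℝ} (hc : 0 < c) (hcb : ∀ n, c ≤ ‖qPoch p p n‖)
    (x : ℂ) (n : ℕ) : ‖x / qPoch p p n‖ ≤ c⁻¹ * ‖x‖ := by
  rw [norm_div]
  calc ‖x‖ / ‖qPoch p p n‖ ≤ ‖x‖ / c :=
        div_le_div_of_nonneg_left (norm_nonneg x) hc (hcb n)
  _ = c⁻¹ * ‖x‖ := by rw [div_eq_inv_mul]

lemma normF_le {p : ℂ} (hp : ‖p‖ < 1) {c : ℝ} (hc : 0 < c) (hcb : ∀ n, c ≤ ‖qPoch p p n‖)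
    (z : ℂ) (i : ℕ) :
    ‖(-1) ^ i * p ^ (i * (i - 1) / 2) * z ^ i / qPoch p p i‖ ≤ c⁻¹ * ‖z‖ ^ i := by
  refine le_trans (div_qPoch_norm_le hc hcb _ i) ?_
  refine mul_le_mul_of_nonneg_left ?_ (by positivity)
  calc ‖(-1) ^ i * p ^ (i * (i - 1) / 2) * z ^ i‖
      = ‖p‖ ^ (i * (i - 1) / 2) * ‖z‖ ^ i := by
        rw [norm_mul, norm_mul, norm_pow, norm_pow, norm_pow, norm_neg, norm_one, one_pow,
          one_mul]
  _ ≤ 1 * ‖z‖ ^ i := by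
        refine mul_le_mul_of_nonneg_right (pow_le_one₀ (norm_nonneg p) hp.le) (by positivity)
  _ = ‖z‖ ^ i := one_mul _

lemma summableF {p : ℂ} (hp : ‖p‖ < 1) {z : ℂ} (hz : ‖z‖ < 1) :
    Summable (fun i : ℕ => (-1) ^ i * p ^ (i * (i - 1) / 2) * z ^ i / qPoch p p i) := by
  obtain ⟨c, hc, hcb⟩ := qPoch_norm_lower hp
  refine Summable.of_norm_bounded (g := fun i => c⁻¹ * ‖z‖ ^ i)
    ((summable_geometric_of_lt_one (norm_nonneg z) hz).mul_left c⁻¹)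
    (fun i => normF_le hp hc hcb z i)

lemma summableG {p : ℂ} (hp : ‖p‖ < 1) {z : ℂ} (hz : ‖z‖ < 1) :
    Summable (fun n : ℕ => z ^ n / qPoch p p n) := by
  obtain ⟨c, hc, hcb⟩ := qPoch_norm_lower hp
  refine Summable.of_norm_bounded (g := fun i => c⁻¹ * ‖z‖ ^ i)
    ((summable_geometric_of_lt_one (norm_nonneg z) hz).mul_left c⁻¹)
    (fun i => ?_)
  refine le_trans (div_qPoch_norm_le hc hcb _ i) ?_
  rw [norm_pow]

lemma one_sub_pow_succ_ne_zero {p : ℂ} (hp : ‖p‖ < 1) (i : ℕ) :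
    (1 : ℂ) - p ^ (i + 1) ≠ 0 := by
  have := qPoch_factor_ne_zero hp hp.le i
  rwa [← pow_succ'] at this

lemma funEqF {p : ℂ} (hp : ‖p‖ < 1) {z : ℂ} (hz : ‖z‖ < 1) :
    eulerF p z = (1 - z) * eulerF p (p * z) := by
  have hpz : ‖p * z‖ < 1 := by
    rw [norm_mul]
    calc ‖p‖ * ‖z‖ ≤ 1 * ‖z‖ := mul_le_mul_of_nonneg_right hp.le (norm_nonneg z)
    _ < 1 := by simpa using hz
  have hs1 := summableF hp hz
  have hs2 := summableF hp hpz
  set f : ℂ → ℕ → ℂ := fun w i => (-1) ^ i * p ^ (i * (i - 1) / 2) * w ^ i / qPoch p p i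
    with hf
  have key : ∀ i, f z i - f (p * z) i
      = (-1) ^ i * p ^ (i * (i - 1) / 2) * z ^ i * (1 - p ^ i) / qPoch p p i := by
    intro i
    rw [hf]
    simp only [mul_pow]
    ring
  have hgsum : Summable (fun i => f z i - f (p * z) i) := hs1.sub hs2
  have hsub : eulerF p z - eulerF p (p * z) = ∑' i, (f z i - f (p * z) i) :=
    (Summable.tsum_sub hs1 hs2).symm
  have hshift : ∑' i, (f z i - f (p * z) i) = -z * eulerF p (p * z) := by
    rw [Summable.tsum_eq_zero_add hgsum]
    have h0 : f z 0 - f (p * z) 0 = 0 := by rw [key]; simp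
    have h1 : ∀ i : ℕ, f z (i + 1) - f (p * z) (i + 1) = -z * f (p * z) i := by
      intro i
      rw [key]
      have hPi : qPoch p p i ≠ 0 := qPoch_ne_zero hp hp.le i
      have hfac : (1 : ℂ) - p ^ (i + 1) ≠ 0 := one_sub_pow_succ_ne_zero hp i
      simp only [Nat.add_sub_cancel]
      rw [Tsucc i, pow_add, qPoch_succ, hf]
      have hps : (1 : ℂ) - p * p ^ i = 1 - p ^ (i + 1) := by rw [← pow_succ']
      rw [hps]
      field_simp
      ring
    rw [h0, zero_add]
    calc ∑' i : ℕ, (f z (i + 1) - f (p * z) (i + 1)) = ∑' i : ℕ, -z * f (p * z) i :=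
          tsum_congr h1
    _ = -z * eulerF p (p * z) := tsum_mul_left
  have := hsub.trans hshift
  linear_combination this

lemma funEqG {p : ℂ} (hp : ‖p‖ < 1) {z : ℂ} (hz : ‖z‖ < 1) :
    eulerG p (p * z) = (1 - z) * eulerG p z := by
  have hpz : ‖p * z‖ < 1 := by
    rw [norm_mul]
    calc ‖p‖ * ‖z‖ ≤ 1 * ‖z‖ := mul_le_mul_of_nonneg_right hp.le (norm_nonneg z)
    _ < 1 := by simpa using hz
  have hs1 := summableG hp hz
  have hs2 := summableG hp hpz
  set f : ℂ → ℕ → ℂ := fun w n => w ^ n / qPoch p p n with hf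
  have key : ∀ n, f z n - f (p * z) n = z ^ n * (1 - p ^ n) / qPoch p p n := by
    intro n
    rw [hf]
    simp only [mul_pow]
    ring
  have hgsum : Summable (fun n => f z n - f (p * z) n) := hs1.sub hs2
  have hsub : eulerG p z - eulerG p (p * z) = ∑' n, (f z n - f (p * z) n) :=
    (Summable.tsum_sub hs1 hs2).symm
  have hshift : ∑' n, (f z n - f (p * z) n) = z * eulerG p z := by
    rw [Summable.tsum_eq_zero_add hgsum]
    have h0 : f z 0 - f (p * z) 0 = 0 := by rw [key]; simp
    have h1 : ∀ n : ℕ, f z (n + 1) - f (p * z) (n + 1) = z * f z n := by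
      intro n
      rw [key]
      have hPn : qPoch p p n ≠ 0 := qPoch_ne_zero hp hp.le n
      have hfac : (1 : ℂ) - p ^ (n + 1) ≠ 0 := one_sub_pow_succ_ne_zero hp n
      rw [qPoch_succ, hf]
      have hps : (1 : ℂ) - p * p ^ n = 1 - p ^ (n + 1) := by rw [← pow_succ']
      rw [hps]
      field_simp
      ring
    rw [h0, zero_add]
    calc ∑' n : ℕ, (f z (n + 1) - f (p * z) (n + 1)) = ∑' n : ℕ, z * f z n :=
          tsum_congr h1
    _ = z * eulerG p z := tsum_mul_left
  have := hsub.trans hshift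
  linear_combination -this

lemma norm_pow_mul_lt_one {p z : ℂ} (hp : ‖p‖ < 1) (hz : ‖z‖ < 1) (N : ℕ) :
    ‖p ^ N * z‖ < 1 := by
  rw [norm_mul, norm_pow]
  calc ‖p‖ ^ N * ‖z‖ ≤ 1 * ‖z‖ := by
        refine mul_le_mul_of_nonneg_right (pow_le_one₀ (norm_nonneg p) hp.le) (norm_nonneg z)
  _ < 1 := by simpa using hz

lemma norm_pow_mul_le {p z : ℂ} (hp : ‖p‖ < 1) (N : ℕ) : ‖p ^ N * z‖ ≤ ‖z‖ := by
  rw [norm_mul, norm_pow]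
  calc ‖p‖ ^ N * ‖z‖ ≤ 1 * ‖z‖ :=
        mul_le_mul_of_nonneg_right (pow_le_one₀ (norm_nonneg p) hp.le) (norm_nonneg z)
  _ = ‖z‖ := one_mul _

lemma iterF {p : ℂ} (hp : ‖p‖ < 1) {z : ℂ} (hz : ‖z‖ < 1) (N : ℕ) :
    eulerF p z = qPoch z p N * eulerF p (p ^ N * z) := by
  induction N with
  | zero => simp [qPoch]
  | succ N ih =>
    rw [ih, qPoch_succ]
    have h := funEqF hp (norm_pow_mul_lt_one hp hz N)
    rw [h]
    have : p * (p ^ N * z) = p ^ (N + 1) * z := by ring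
    rw [this]
    ring

lemma iterG {p : ℂ} (hp : ‖p‖ < 1) {z : ℂ} (hz : ‖z‖ < 1) (N : ℕ) :
    eulerG p (p ^ N * z) = qPoch z p N * eulerG p z := by
  induction N with
  | zero => simp [qPoch]
  | succ N ih =>
    have h := funEqG hp (norm_pow_mul_lt_one hp hz N)
    have e : p * (p ^ N * z) = p ^ (N + 1) * z := by ring
    rw [← e, h, ih, qPoch_succ]
    ring

lemma eulerF_sub_one_bound {p : ℂ} (hp : ‖p‖ < 1) {c : ℝ} (hc : 0 < c)
    (hcb : ∀ n, c ≤ ‖qPoch p p n‖) {z w : ℂ} (hz : ‖z‖ < 1) (hwz : ‖w‖ ≤ ‖z‖) :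
    ‖eulerF p w - 1‖ ≤ c⁻¹ * (1 - ‖z‖)⁻¹ * ‖w‖ := by
  have hw : ‖w‖ < 1 := lt_of_le_of_lt hwz hz
  have hs := summableF hp hw
  have h0 : (-1 : ℂ) ^ 0 * p ^ (0 * (0 - 1) / 2) * w ^ 0 / qPoch p p 0 = 1 := by
    simp [qPoch]
  rw [eulerF, Summable.tsum_eq_zero_add hs, h0, add_sub_cancel_left]
  have hgeo : HasSum (fun i : ℕ => c⁻¹ * ‖w‖ * ‖z‖ ^ i) (c⁻¹ * ‖w‖ * (1 - ‖z‖)⁻¹) :=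
    (hasSum_geometric_of_lt_one (norm_nonneg z) hz).mul_left _
  have hbd : ∀ i : ℕ,
      ‖(-1) ^ (i + 1) * p ^ ((i + 1) * (i + 1 - 1) / 2) * w ^ (i + 1) / qPoch p p (i + 1)‖
        ≤ c⁻¹ * ‖w‖ * ‖z‖ ^ i := by
    intro i
    refine le_trans (normF_le hp hc hcb w (i + 1)) ?_
    rw [pow_succ']
    rw [← mul_assoc]
    refine mul_le_mul_of_nonneg_left (pow_le_pow_left₀ (norm_nonneg w) hwz i) ?_
    positivity
  refine le_trans (tsum_of_norm_bounded hgeo hbd) ?_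
  apply le_of_eq
  ring

lemma eulerG_sub_one_bound {p : ℂ} (hp : ‖p‖ < 1) {c : ℝ} (hc : 0 < c)
    (hcb : ∀ n, c ≤ ‖qPoch p p n‖) {z w : ℂ} (hz : ‖z‖ < 1) (hwz : ‖w‖ ≤ ‖z‖) :
    ‖eulerG p w - 1‖ ≤ c⁻¹ * (1 - ‖z‖)⁻¹ * ‖w‖ := by
  have hw : ‖w‖ < 1 := lt_of_le_of_lt hwz hz
  have hs := summableG hp hw
  have h0 : w ^ 0 / qPoch p p 0 = 1 := by simp [qPoch]
  rw [eulerG, Summable.tsum_eq_zero_add hs, h0, add_sub_cancel_left]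
  have hgeo : HasSum (fun i : ℕ => c⁻¹ * ‖w‖ * ‖z‖ ^ i) (c⁻¹ * ‖w‖ * (1 - ‖z‖)⁻¹) :=
    (hasSum_geometric_of_lt_one (norm_nonneg z) hz).mul_left _
  have hbd : ∀ i : ℕ, ‖w ^ (i + 1) / qPoch p p (i + 1)‖ ≤ c⁻¹ * ‖w‖ * ‖z‖ ^ i := by
    intro i
    refine le_trans (div_qPoch_norm_le hc hcb _ (i + 1)) ?_
    rw [norm_pow, pow_succ', ← mul_assoc]
    refine mul_le_mul_of_nonneg_left (pow_le_pow_left₀ (norm_nonneg w) hwz i) ?_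
    positivity
  refine le_trans (tsum_of_norm_bounded hgeo hbd) ?_
  apply le_of_eq
  ring

lemma tendsto_aux {p z : ℂ} (hp : ‖p‖ < 1) (hz : ‖z‖ < 1) {H : ℂ → ℂ} {K : ℝ}
    (hbd : ∀ w : ℂ, ‖w‖ ≤ ‖z‖ → ‖H w - 1‖ ≤ K * ‖w‖) :
    Filter.Tendsto (fun N : ℕ => H (p ^ N * z)) Filter.atTop (nhds 1) := by
  have h0 : Filter.Tendsto (fun N : ℕ => H (p ^ N * z) - 1) Filter.atTop (nhds 0) := by
    refine squeeze_zero_norm (fun N => hbd (p ^ N * z) (norm_pow_mul_le hp N)) ?_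
    have : Filter.Tendsto (fun N : ℕ => K * ‖p ^ N * z‖) Filter.atTop (nhds (K * 0)) := by
      refine Filter.Tendsto.const_mul K ?_
      have h2 : Filter.Tendsto (fun N : ℕ => ‖p‖ ^ N * ‖z‖) Filter.atTop (nhds (0 * ‖z‖)) :=
        (tendsto_pow_atTop_nhds_zero_of_lt_one (norm_nonneg p) hp).mul_const ‖z‖
      simp only [zero_mul] at h2
      refine h2.congr fun N => ?_
      rw [norm_mul, norm_pow]
    simpa using this
  have := h0.add_const 1
  simpa using this

/-- Euler's identity: `∑ (-1)^i p^(i(i-1)/2) z^i/(p;p)_i = (z;p)_∞`. -/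
lemma eulerF_eq {p : ℂ} (hp : ‖p‖ < 1) {z : ℂ} (hz : ‖z‖ < 1) :
    eulerF p z = qPochInf z p := by
  obtain ⟨c, hc, hcb⟩ := qPoch_norm_lower hp
  have hlim : Filter.Tendsto (fun N : ℕ => eulerF p (p ^ N * z)) Filter.atTop (nhds 1) :=
    tendsto_aux hp hz (fun w hw => eulerF_sub_one_bound hp hc hcb hz hw)
  have h1 : Filter.Tendsto (fun N : ℕ => qPoch z p N * eulerF p (p ^ N * z)) Filter.atTop
      (nhds (qPochInf z p * 1)) := (qPoch_tendsto hz hp).mul hlim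
  have h2 : (fun N : ℕ => qPoch z p N * eulerF p (p ^ N * z)) = fun _ => eulerF p z :=
    funext fun N => (iterF hp hz N).symm
  rw [h2] at h1
  have := tendsto_nhds_unique h1 tendsto_const_nhds
  rw [← this, mul_one]

/-- Euler's identity: `(z;p)_∞ ∑ z^n/(p;p)_n = 1`. -/
lemma eulerG_eq {p : ℂ} (hp : ‖p‖ < 1) {z : ℂ} (hz : ‖z‖ < 1) :
    qPochInf z p * eulerG p z = 1 := by
  obtain ⟨c, hc, hcb⟩ := qPoch_norm_lower hp
  have hlim : Filter.Tendsto (fun N : ℕ => eulerG p (p ^ N * z)) Filter.atTop (nhds 1) :=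
    tendsto_aux hp hz (fun w hw => eulerG_sub_one_bound hp hc hcb hz hw)
  have h1 : Filter.Tendsto (fun N : ℕ => qPoch z p N * eulerG p z) Filter.atTop
      (nhds (qPochInf z p * eulerG p z)) := (qPoch_tendsto hz hp).mul_const _
  have h2 : (fun N : ℕ => qPoch z p N * eulerG p z)
      = fun N : ℕ => eulerG p (p ^ N * z) := funext fun N => (iterG hp hz N).symm
  rw [h2] at h1
  exact tendsto_nhds_unique h1 hlim

noncomputable def mainT (q : ℂ) (k j i : ℕ) : ℂ :=
  qPochInf (q ^ 2) (q ^ 2) * (-1) ^ i * q ^ (2 * j + k)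
      * (q ^ 2) ^ (i * (i - 1) / 2 + (j + k + 1) * i)
    / (qPoch (q ^ 2) (q ^ 2) j * qPoch (q ^ 2) (q ^ 2) i)

lemma sq_norm_lt_one {q : ℂ} (hq : ‖q‖ < 1) : ‖q ^ 2‖ < 1 := by
  rw [norm_pow]
  exact pow_lt_one₀ (norm_nonneg q) hq two_ne_zero

/-- The outer rewriting: expanding `(p^(j+k+1);p)_∞` by Euler's identity. -/
lemma outer_term {q : ℂ} (hq : ‖q‖ < 1) (k j : ℕ) :
    qPochInf (q ^ 2) (q ^ 2) ^ 2 *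
      (q ^ (2 * j + k) / (qPoch (q ^ 2) (q ^ 2) j * qPoch (q ^ 2) (q ^ 2) (j + k)))
      = ∑' i : ℕ, mainT q k j i := by
  set p := q ^ 2 with hpdef
  have hp : ‖p‖ < 1 := sq_norm_lt_one hq
  have hsplit := qPochInf_split hp (j + k)
  have heuler := eulerF_eq hp (pow_norm_lt_one hp (j + k))
  have hPj : qPoch p p j ≠ 0 := qPoch_ne_zero hp hp.le j
  have hPjk : qPoch p p (j + k) ≠ 0 := qPoch_ne_zero hp hp.le (j + k)
  clear_value p
  have hstep : ∀ i : ℕ, mainT q k j i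
      = (qPochInf p p * q ^ (2 * j + k) / qPoch p p j)
        * ((-1) ^ i * p ^ (i * (i - 1) / 2) * (p ^ (j + k + 1)) ^ i / qPoch p p i) := by
    intro i
    rw [mainT, ← hpdef, ← pow_mul]
    rw [show i * (i - 1) / 2 + (j + k + 1) * i = i * (i - 1) / 2 + (j + k + 1) * i from rfl]
    generalize i * (i - 1) / 2 = T
    rw [show T + (j + k + 1) * i = T + (j + k + 1) * i from rfl, pow_add]
    ring
  rw [tsum_congr hstep, tsum_mul_left]
  have : (∑' i : ℕ, (-1) ^ i * p ^ (i * (i - 1) / 2) * (p ^ (j + k + 1)) ^ i / qPoch p p i)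
      = eulerF p (p ^ (j + k + 1)) := rfl
  rw [this, heuler, hsplit]
  field_simp

/-- The inner sum over `j`, using Euler's other identity. -/
lemma main_inner_sum {q : ℂ} (hq : ‖q‖ < 1) (k i : ℕ) :
    ∑' j : ℕ, mainT q k j i
      = (-1) ^ i * q ^ k * (q ^ 2) ^ (i * (i - 1) / 2 + (k + 1) * i) := by
  set p := q ^ 2 with hpdef
  have hp : ‖p‖ < 1 := sq_norm_lt_one hq
  have hPi : qPoch p p i ≠ 0 := qPoch_ne_zero hp hp.le i
  have hsplit := qPochInf_split hp i
  have heuler := eulerG_eq hp (pow_norm_lt_one hp i)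
  clear_value p
  have hstep : ∀ j : ℕ, mainT q k j i
      = (qPochInf p p * (-1) ^ i * q ^ k * p ^ (i * (i - 1) / 2 + (k + 1) * i) / qPoch p p i)
        * ((p ^ (i + 1)) ^ j / qPoch p p j) := by
    intro j
    rw [mainT, ← hpdef]
    have hq2 : q ^ (2 * j + k) = q ^ k * p ^ j := by
      rw [pow_add, pow_mul, ← hpdef]; ring
    rw [hq2, ← pow_mul]
    generalize i * (i - 1) / 2 = T
    have he : T + (j + k + 1) * i + j = (T + (k + 1) * i) + (i + 1) * j := by ring
    have : p ^ j * p ^ (T + (j + k + 1) * i) = p ^ (T + (k + 1) * i) * p ^ ((i + 1) * j) := by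
      rw [← pow_add, ← pow_add, ← he, add_comm (T + (j + k + 1) * i) j]
    field_simp
    linear_combination (qPochInf p p * (-1) ^ i * q ^ k) * this
  rw [tsum_congr hstep, tsum_mul_left]
  have hG : (∑' j : ℕ, (p ^ (i + 1)) ^ j / qPoch p p j) = eulerG p (p ^ (i + 1)) := rfl
  rw [hG, hsplit]
  field_simp
  linear_combination (q ^ k * p ^ (k * i) * p ^ (i * (i - 1) / 2) * p ^ i) * heuler

lemma mainT_summable {q : ℂ} (hq : ‖q‖ < 1) (k : ℕ) :
    Summable (Function.uncurry fun j i : ℕ => mainT q k j i) := by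
  set p := q ^ 2 with hpdef
  have hp : ‖p‖ < 1 := sq_norm_lt_one hq
  obtain ⟨c, hc, hcb⟩ := qPoch_norm_lower hp
  set t : ℝ := ‖p‖ with htdef
  have ht0 : 0 ≤ t := norm_nonneg p
  have ht1 : t < 1 := hp
  set D : ℝ := c⁻¹ * (c⁻¹ * (‖qPochInf p p‖ * ‖q‖ ^ k)) with hD
  have hbound : ∀ ji : ℕ × ℕ,
      ‖(Function.uncurry fun j i : ℕ => mainT q k j i) ji‖ ≤ D * (t ^ ji.1 * t ^ ji.2) := by
    rintro ⟨j, i⟩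
    have hE : i ≤ i * (i - 1) / 2 + (j + k + 1) * i := by
      calc i = 1 * i := (one_mul i).symm
      _ ≤ (j + k + 1) * i := Nat.mul_le_mul_right i (by omega)
      _ ≤ i * (i - 1) / 2 + (j + k + 1) * i := Nat.le_add_left _ _
    have h1 : Function.uncurry (fun j i : ℕ => mainT q k j i) (j, i)
        = (qPochInf p p * (-1) ^ i * q ^ (2 * j + k)
            * p ^ (i * (i - 1) / 2 + (j + k + 1) * i) / qPoch p p j) / qPoch p p i := by
      rw [Function.uncurry, mainT, ← hpdef, div_div]
    rw [h1]
    refine le_trans (div_qPoch_norm_le hc hcb _ i) ?_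
    have h2 : ‖qPochInf p p * (-1) ^ i * q ^ (2 * j + k)
        * p ^ (i * (i - 1) / 2 + (j + k + 1) * i) / qPoch p p j‖
        ≤ c⁻¹ * ‖qPochInf p p * (-1) ^ i * q ^ (2 * j + k)
            * p ^ (i * (i - 1) / 2 + (j + k + 1) * i)‖ := div_qPoch_norm_le hc hcb _ j
    refine le_trans (mul_le_mul_of_nonneg_left h2 (by positivity)) ?_
    have h3 : ‖qPochInf p p * (-1) ^ i * q ^ (2 * j + k)
        * p ^ (i * (i - 1) / 2 + (j + k + 1) * i)‖
        = ‖qPochInf p p‖ * (‖q‖ ^ k * t ^ j) * ‖p‖ ^ (i * (i - 1) / 2 + (j + k + 1) * i) := by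
      rw [norm_mul, norm_mul, norm_mul, norm_pow, norm_pow, norm_pow, norm_neg, norm_one,
        one_pow, mul_one]
      congr 2
      rw [pow_add, pow_mul, htdef, hpdef, norm_pow]
      ring
    rw [h3]
    have h4 : ‖p‖ ^ (i * (i - 1) / 2 + (j + k + 1) * i) ≤ t ^ i :=
      pow_le_pow_of_le_one ht0 ht1.le hE
    calc c⁻¹ * (c⁻¹ * (‖qPochInf p p‖ * (‖q‖ ^ k * t ^ j)
          * ‖p‖ ^ (i * (i - 1) / 2 + (j + k + 1) * i)))
        ≤ c⁻¹ * (c⁻¹ * (‖qPochInf p p‖ * (‖q‖ ^ k * t ^ j) * t ^ i)) := by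
          have hnn : (0:ℝ) ≤ ‖qPochInf p p‖ * (‖q‖ ^ k * t ^ j) := by positivity
          have := mul_le_mul_of_nonneg_left h4 hnn
          have h5 := mul_le_mul_of_nonneg_left this (le_of_lt (inv_pos.mpr hc))
          have h6 := mul_le_mul_of_nonneg_left h5 (le_of_lt (inv_pos.mpr hc))
          exact h6
    _ = D * (t ^ j * t ^ i) := by rw [hD]; ring
  refine Summable.of_norm_bounded ?_ hbound
  have hgeo : Summable (fun n : ℕ => t ^ n) := summable_geometric_of_lt_one ht0 ht1
  have := (hgeo.mul_of_nonneg hgeo (fun n => pow_nonneg ht0 n) (fun n => pow_nonneg ht0 n))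
  exact this.mul_left D

lemma exponent_eq (k i : ℕ) :
    2 * (i * (i - 1) / 2 + (k + 1) * i) + k = (i + k) * (i + k + 1) - k ^ 2 := by
  have h2T : 2 * (i * (i - 1) / 2) = i * (i - 1) := by
    refine Nat.two_mul_div_two_of_even ?_
    rcases Nat.even_or_odd i with h | h
    · exact h.mul_right _
    · rcases h with ⟨m, rfl⟩
      refine Even.mul_left ⟨m, by omega⟩ _
  have hmain : (i + k) * (i + k + 1) = (2 * (i * (i - 1) / 2 + (k + 1) * i) + k) + k ^ 2 := by
    rw [Nat.mul_add 2, h2T]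
    cases i with
    | zero => ring_nf
    | succ n =>
      simp only [Nat.add_sub_cancel]
      ring
  omega


/-- Lemma 2: `(q²;q²)_∞² ∑_{j≥0} q^{2j+k}/((q²;q²)_j (q²;q²)_{j+k})
    = ∑_{j≥k} (-1)^{j-k} q^{j(j+1) - k²}`. -/
theorem stmt_1 (k : ℕ) (q : ℂ) (hq : ‖q‖ < 1) :
    (qPochInf (q ^ 2) (q ^ 2)) ^ 2 *
      ∑' j : ℕ, q ^ (2 * j + k) / (qPoch (q ^ 2) (q ^ 2) j * qPoch (q ^ 2) (q ^ 2) (j + k)) =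
    ∑' j : ℕ, (-1 : ℂ) ^ j * q ^ ((j + k) * (j + k + 1) - k ^ 2) := by
  calc (qPochInf (q ^ 2) (q ^ 2)) ^ 2 *
      ∑' j : ℕ, q ^ (2 * j + k) / (qPoch (q ^ 2) (q ^ 2) j * qPoch (q ^ 2) (q ^ 2) (j + k))
      = ∑' j : ℕ, (qPochInf (q ^ 2) (q ^ 2)) ^ 2 *
          (q ^ (2 * j + k) / (qPoch (q ^ 2) (q ^ 2) j * qPoch (q ^ 2) (q ^ 2) (j + k))) :=
        tsum_mul_left.symm
  _ = ∑' j : ℕ, ∑' i : ℕ, mainT q k j i := tsum_congr fun j => outer_term hq k j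
  _ = ∑' i : ℕ, ∑' j : ℕ, mainT q k j i := (Summable.tsum_comm (mainT_summable hq k)).symm
  _ = ∑' i : ℕ, (-1 : ℂ) ^ i * q ^ ((i + k) * (i + k + 1) - k ^ 2) := by
      refine tsum_congr fun i => ?_
      rw [main_inner_sum hq k i, ← pow_mul, mul_assoc, ← pow_add,
        add_comm k (2 * (i * (i - 1) / 2 + (k + 1) * i)), exponent_eq k i]
end

section
/- Let (V_j)_{j≥0} be a sequence in a commutative ring with finite support, and define R_k = ∑_{j=k}^∞ (-1)^{j-k} binom(2j, j-k) V_j for each k ≥ 0. Then for all j ≥ 0, V_j = ∑_{k=j}^∞ B_{k,j} R_k, where B_{0,0} = 1, B_{k,0} = 2 for k ≥ 1, and B_{k,j} = (2k/(k+j)) binom(k+j, 2j) for j ≥ 1, k ≥ j. -/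
open Finset

def mmA (i k : ℕ) : ℚ := if k ≤ i then (-1)^(i-k) * ((2*i).choose (i-k)) else 0

def mmb (k j : ℕ) : ℚ :=
  if j ≤ k then (if k = 0 then 1 else ((k+j).choose (2*j) : ℚ) + (((k-1)+j).choose (2*j) : ℚ))
  else 0

lemma mmA_eval {i k : ℕ} (h : k ≤ i) : mmA i k = (-1)^(i-k) * ((2*i).choose (i-k)) := by
  unfold mmA; rw [if_pos h]

lemma mmA_zero {i k : ℕ} (h : i < k) : mmA i k = 0 := by
  unfold mmA; rw [if_neg (by omega)]

lemma mmb_eval {k j : ℕ} (h : j ≤ k) (hk : k ≠ 0) :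
    mmb k j = ((k+j).choose (2*j) : ℚ) + (((k-1)+j).choose (2*j) : ℚ) := by
  unfold mmb; rw [if_pos h, if_neg hk]

lemma mmb_zero {k j : ℕ} (h : k < j) : mmb k j = 0 := by
  unfold mmb; rw [if_neg (by omega)]

lemma mmb00 : mmb 0 0 = 1 := by unfold mmb; norm_num

lemma pascalQ (m r : ℕ) : (((m+1).choose (r+1) : ℚ)) = m.choose r + m.choose (r+1) := by
  exact_mod_cast Nat.choose_succ_succ m r

lemma mmA_rec (i k : ℕ) : mmA (i+1) (k+1) = mmA i k - 2 * mmA i (k+1) + mmA i (k+2) := by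
  rcases lt_or_ge i k with h | h
  · rw [mmA_zero (by omega), mmA_zero (by omega), mmA_zero (by omega), mmA_zero (by omega)]
    ring
  · rcases (by omega : i = k ∨ i = k + 1 ∨ k + 2 ≤ i) with h1 | h1 | h1
    · rw [mmA_eval (by omega), mmA_eval (by omega), mmA_zero (by omega), mmA_zero (by omega),
        show i + 1 - (k+1) = 0 from by omega, show i - k = 0 from by omega]
      norm_num
    · rw [mmA_eval (by omega), mmA_eval (by omega), mmA_eval (by omega), mmA_zero (by omega),
        show i + 1 - (k+1) = 1 from by omega, show i - k = 1 from by omega,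
        show i - (k+1) = 0 from by omega, h1]
      simp [Nat.choose_one_right]
      ring
    · rw [mmA_eval (by omega), mmA_eval (by omega), mmA_eval (by omega), mmA_eval (by omega),
        show i + 1 - (k+1) = (i - (k+2)) + 2 from by omega,
        show i - k = (i - (k+2)) + 2 from by omega,
        show i - (k+1) = (i - (k+2)) + 1 from by omega,
        show 2 * (i+1) = (2*i + 1) + 1 from by ring]
      set m := i - (k+2)
      set n := 2 * i
      linear_combination ((-1:ℚ)^m) * (pascalQ (n+1) (m+1) + pascalQ n m + pascalQ n (m+1))

lemma mmb_rec (k j : ℕ) :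
    mmb (k+1) (j+1) - 2 * mmb k (j+1) + mmb (k-1) (j+1) = mmb k j := by
  rcases lt_or_ge k j with h | h
  · rw [mmb_zero (by omega), mmb_zero (by omega), mmb_zero (by omega), mmb_zero (by omega)]
    ring
  · rcases (by omega : k = j ∨ k = j + 1 ∨ j + 2 ≤ k) with h1 | h1 | h1
    · -- k = j
      rw [mmb_eval (by omega) (by omega), mmb_zero (by omega), mmb_zero (by omega)]
      rcases Nat.eq_zero_or_pos j with rfl | hj
      · rw [show k = 0 from h1, mmb00]
        norm_num
      · rw [mmb_eval (by omega) (by omega),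
          show k + 1 + (j+1) = 2*(j+1) from by omega,
          show k + 1 - 1 + (j+1) = 2*j + 1 from by omega,
          show k + j = 2*j from by omega,
          show k - 1 + j = 2*j - 1 from by omega,
          Nat.choose_self, Nat.choose_self,
          Nat.choose_eq_zero_of_lt (by omega), Nat.choose_eq_zero_of_lt (by omega)]
        norm_num
    · -- k = j+1
      rw [mmb_eval (by omega) (by omega), mmb_eval (by omega) (by omega),
        mmb_zero (by omega), mmb_eval (by omega) (by omega),
        show k + 1 + (j + 1) = (2*(j+1)) + 1 from by omega,
        show k + 1 - 1 + (j+1) = 2*(j+1) from by omega,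
        show k + (j + 1) = 2*(j+1) from by omega,
        show k - 1 + (j+1) = (2*j) + 1 from by omega,
        show k + j = (2*j) + 1 from by omega,
        show k - 1 + j = 2*j from by omega,
        Nat.choose_succ_self_right, Nat.choose_self, Nat.choose_succ_self_right,
        Nat.choose_self, Nat.choose_eq_zero_of_lt (by omega)]
      push_cast
      ring
    · -- generic
      rw [mmb_eval (by omega) (by omega), mmb_eval (by omega) (by omega),
        mmb_eval (by omega) (by omega), mmb_eval (by omega) (by omega),
        show k + j = (k + j - 1) + 1 from by omega,
        show k + 1 + (j+1) = ((k + j - 1) + 2) + 1 from by omega,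
        show k + 1 - 1 + (j+1) = (k + j - 1) + 2 from by omega,
        show k + (j+1) = (k + j - 1) + 2 from by omega,
        show k - 1 + (j+1) = (k + j - 1) + 1 from by omega,
        show k - 1 - 1 + (j+1) = k + j - 1 from by omega,
        show k - 1 + j = k + j - 1 from by omega,
        show 2 * (j+1) = ((2*j) + 1) + 1 from by ring]
      set n := k + j - 1
      set d := 2 * j
      linear_combination pascalQ (n+2) (d+1) + pascalQ (n+1) d + pascalQ n d - pascalQ n (d+1)

def mmG (i j : ℕ) : ℚ := ∑ k ∈ Finset.range (i+1), mmA i k * mmb k j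

lemma mm_alt (n : ℕ) : ∀ m, ∑ r ∈ range (m+1), (-1:ℚ)^r * ((n+1).choose r) = (-1)^m * (n.choose m) := by
  intro m
  induction m with
  | zero => simp
  | succ m ih =>
    rw [Finset.sum_range_succ, ih, pascalQ]
    ring

lemma mmG_zero (i : ℕ) : mmG i 0 = if i = 0 then 1 else 0 := by
  rcases i with _ | m
  · rw [if_pos rfl]
    unfold mmG
    rw [Finset.sum_range_one, mmb00, mmA_eval (le_refl 0)]
    norm_num
  · rw [if_neg (by omega)]
    have h1 : mmG (m+1) 0 = 2 * (∑ k ∈ range (m+2), mmA (m+1) k) - mmA (m+1) 0 := by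
      unfold mmG
      have hterm : ∀ k ∈ range (m+2), mmA (m+1) k * mmb k 0
          = 2 * mmA (m+1) k - (if k = 0 then mmA (m+1) k else 0) := by
        intro k _
        rcases Nat.eq_zero_or_pos k with rfl | hk
        · rw [if_pos rfl, mmb00]; ring
        · rw [if_neg (by omega), mmb_eval (by omega) (by omega)]
          simp [Nat.choose_zero_right]
          ring
      rw [Finset.sum_congr rfl hterm, Finset.sum_sub_distrib, ← Finset.mul_sum,
        Finset.sum_ite_eq' (range (m+2)) 0 (mmA (m+1)), if_pos (by simp)]
    have h2 : ∑ k ∈ range (m+2), mmA (m+1) k = (-1)^(m+1) * ((2*m+1).choose (m+1)) := by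
      rw [← Finset.sum_range_reflect]
      have : ∀ r ∈ range (m+2), mmA (m+1) (m+2-1-r) = (-1:ℚ)^r * ((2*m+1+1).choose r) := by
        intro r hr
        simp only [Finset.mem_range] at hr
        rw [mmA_eval (by omega), show m+1-(m+2-1-r) = r from by omega,
          show 2*(m+1) = 2*m+1+1 from by ring]
      rw [Finset.sum_congr rfl this, mm_alt (2*m+1) (m+1)]
    rw [h1, h2, mmA_eval (by omega), Nat.sub_zero,
      show 2*(m+1) = (2*m+1)+1 from by ring, pascalQ (2*m+1) m, Nat.choose_symm_half]
    ring

lemma mmG_succ (i j : ℕ) : mmG (i+1) (j+1) = mmG i j := by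
  have hb0 : mmb 0 (j+1) = 0 := mmb_zero (by omega)
  have S2 : ∑ k ∈ range (i+1), mmA i (k+1) * mmb (k+1) (j+1)
      = ∑ k ∈ range (i+1), mmA i k * mmb k (j+1) := by
    have h := Finset.sum_range_succ' (fun k => mmA i k * mmb k (j+1)) (i+1)
    rw [Finset.sum_range_succ (fun k => mmA i k * mmb k (j+1)) (i+1)] at h
    rw [mmA_zero (show i < i+1 by omega), hb0, zero_mul, mul_zero, add_zero, add_zero] at h
    exact h.symm
  have S3 : ∑ k ∈ range (i+1), mmA i (k+2) * mmb (k+1) (j+1)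
      = ∑ k ∈ range (i+1), mmA i k * mmb (k-1) (j+1) := by
    have h1 := Finset.sum_range_succ' (fun k => mmA i k * mmb (k-1) (j+1)) (i+2)
    rw [Finset.sum_range_succ (fun k => mmA i k * mmb (k-1) (j+1)) (i+2),
        Finset.sum_range_succ (fun k => mmA i k * mmb (k-1) (j+1)) (i+1)] at h1
    rw [Finset.sum_range_succ' (fun k => mmA i (k+1) * mmb (k+1-1) (j+1)) (i+1)] at h1
    simp only [mmA_zero (show i < i+1 by omega), mmA_zero (show i < i+2 by omega),
      mmb_zero (show 0 < j+1 by omega), Nat.add_sub_cancel] at h1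
    simp only [zero_mul, mul_zero, add_zero] at h1
    exact h1.symm
  unfold mmG
  rw [Finset.sum_range_succ' (fun k => mmA (i+1) k * mmb k (j+1)) (i+1)]
  rw [hb0, mul_zero, add_zero]
  have step : ∀ k ∈ range (i+1), mmA (i+1) (k+1) * mmb (k+1) (j+1)
      = mmA i k * mmb (k+1) (j+1) - 2 * (mmA i (k+1) * mmb (k+1) (j+1))
        + mmA i (k+2) * mmb (k+1) (j+1) := by
    intro k _
    rw [mmA_rec]
    ring
  rw [Finset.sum_congr rfl step, Finset.sum_add_distrib, Finset.sum_sub_distrib,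
    ← Finset.mul_sum, S2, S3]
  have final : ∀ k ∈ range (i+1), mmA i k * mmb k j
      = mmA i k * mmb (k+1) (j+1) - 2 * (mmA i k * mmb k (j+1))
        + mmA i k * mmb (k-1) (j+1) := by
    intro k _
    rw [← mmb_rec k j]
    ring
  rw [Finset.sum_congr rfl final, Finset.sum_add_distrib, Finset.sum_sub_distrib,
    ← Finset.mul_sum]

lemma mm_orth : ∀ j i : ℕ, mmG i j = if i = j then 1 else 0 := by
  intro j
  induction j with
  | zero => intro i; exact mmG_zero i
  | succ j ih =>
    intro i
    cases i with
    | zero =>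
      unfold mmG
      rw [Finset.sum_range_one, mmb_zero (show 0 < j+1 by omega), mul_zero,
        if_neg (by omega)]
    | succ i =>
      rw [mmG_succ, ih i]
      by_cases h : i = j
      · rw [if_pos h, if_pos (by omega)]
      · rw [if_neg h, if_neg (by omega)]

lemma mm_swap (f : ℕ → ℕ → ℚ) (j N : ℕ) :
    ∑ k ∈ Finset.Icc j N, ∑ i ∈ Finset.Icc k N, f k i
      = ∑ i ∈ Finset.Icc j N, ∑ k ∈ Finset.Icc j i, f k i := by
  rw [Finset.sum_sigma', Finset.sum_sigma']
  apply Finset.sum_nbij' (i := fun p => ⟨p.2, p.1⟩) (j := fun p => ⟨p.2, p.1⟩) <;>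
    (intros p hp
     first
       | rfl
       | (simp only [Finset.mem_sigma, Finset.mem_Icc] at hp ⊢; omega))

lemma mmb_transfer (B : ℕ → ℕ → ℚ) (hB00 : B 0 0 = 1) (hBk0 : ∀ k, 1 ≤ k → B k 0 = 2)
    (hBkj : ∀ j k : ℕ, 1 ≤ j → j ≤ k → B k j = (2 * k) / (k + j) * ((k + j).choose (2 * j)))
    {j k : ℕ} (h : j ≤ k) : B k j = mmb k j := by
  rcases Nat.eq_zero_or_pos j with rfl | hj
  · rcases Nat.eq_zero_or_pos k with rfl | hk
    · rw [hB00, mmb00]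
    · rw [hBk0 k hk, mmb_eval (by omega) (by omega)]
      norm_num
  · have hk : k ≠ 0 := by omega
    rw [hBkj j k hj h, mmb_eval h hk]
    have hnat := Nat.choose_mul_succ_eq (k-1+j) (2*j)
    rw [show k - 1 + j + 1 = k + j from by omega, show k + j - 2*j = k - j from by omega] at hnat
    have cq := congrArg (Nat.cast : ℕ → ℚ) hnat
    push_cast [Nat.cast_sub h] at cq
    have hne : ((k:ℚ) + j) ≠ 0 := by
      have : (0:ℚ) < k := by exact_mod_cast Nat.pos_of_ne_zero hk
      have : (0:ℚ) ≤ j := by positivity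
      positivity
    rw [div_mul_eq_mul_div, div_eq_iff hne]
    linear_combination -cq

lemma mmG_Icc (i j : ℕ) (h : j ≤ i) :
    ∑ k ∈ Finset.Icc j i, mmA i k * mmb k j = mmG i j := by
  unfold mmG
  apply Finset.sum_subset
  · intro k hk
    simp only [Finset.mem_Icc] at hk
    simp only [Finset.mem_range]
    omega
  · intro k hk hnk
    simp only [Finset.mem_Icc] at hnk
    simp only [Finset.mem_range] at hk
    rw [mmb_zero (by omega), mul_zero]


/-- Matrix inversion for MacMahon-type series: if `(V_j)` has finite support
    (vanishing beyond `N`) and `R_k = ∑_{j≥k} (-1)^{j-k} C(2j, j-k) V_j`, then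
    `V_j = ∑_{k≥j} B_{k,j} R_k`, where `B_{0,0} = 1`, `B_{k,0} = 2` for `k ≥ 1`,
    and `B_{k,j} = (2k/(k+j))·C(k+j, 2j)` for `k ≥ j ≥ 1`. -/
theorem stmt_5 (B : ℕ → ℕ → ℚ)
    (hB00 : B 0 0 = 1)
    (hBk0 : ∀ k : ℕ, 1 ≤ k → B k 0 = 2)
    (hBkj : ∀ j k : ℕ, 1 ≤ j → j ≤ k →
      B k j = (2 * k) / (k + j) * ((k + j).choose (2 * j)))
    (V : ℕ → ℚ) (N : ℕ) (hV : ∀ j : ℕ, N < j → V j = 0)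
    (R : ℕ → ℚ)
    (hR : ∀ k : ℕ, R k =
      ∑ j ∈ Finset.Icc k N, (-1 : ℚ) ^ (j - k) * ((2 * j).choose (j - k)) * V j) :
    ∀ j : ℕ, V j = ∑ k ∈ Finset.Icc j N, B k j * R k := by
  intro j
  by_cases hjN : j ≤ N
  · have step1 : ∑ k ∈ Finset.Icc j N, B k j * R k
        = ∑ k ∈ Finset.Icc j N, ∑ i ∈ Finset.Icc k N, mmb k j * (mmA i k * V i) := by
      apply Finset.sum_congr rfl
      intro k hk
      simp only [Finset.mem_Icc] at hk
      rw [hR k, Finset.mul_sum, mmb_transfer B hB00 hBk0 hBkj hk.1]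
      apply Finset.sum_congr rfl
      intro i hi
      simp only [Finset.mem_Icc] at hi
      rw [mmA_eval hi.1]
    rw [step1, mm_swap (fun k i => mmb k j * (mmA i k * V i)) j N]
    have step2 : ∀ i ∈ Finset.Icc j N,
        ∑ k ∈ Finset.Icc j i, mmb k j * (mmA i k * V i)
          = (if i = j then 1 else 0) * V i := by
      intro i hi
      simp only [Finset.mem_Icc] at hi
      have : ∑ k ∈ Finset.Icc j i, mmb k j * (mmA i k * V i)
          = (∑ k ∈ Finset.Icc j i, mmA i k * mmb k j) * V i := by
        rw [Finset.sum_mul]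
        apply Finset.sum_congr rfl
        intro k _
        ring
      rw [this, mmG_Icc i j hi.1, mm_orth j i]
    rw [Finset.sum_congr rfl step2]
    have : ∀ i ∈ Finset.Icc j N, (if i = j then (1:ℚ) else 0) * V i
        = if i = j then V i else 0 := by
      intro i _
      split_ifs <;> ring
    rw [Finset.sum_congr rfl this, Finset.sum_ite_eq' (Finset.Icc j N) j V,
      if_pos (by simp only [Finset.mem_Icc]; omega)]
  · rw [Finset.Icc_eq_empty (by omega), Finset.sum_empty]
    exact hV j (by omega)
end
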